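/- arXiv:2203.03594 — 2 statements merged into one kernel-verified Lean document; each statement's English description precedes it below -/
import Mathlib

section
/- Sequential composition of differential privacy: if A₁ is ε₁-differentially private and, for each output o of A₁, A₂(·, o) is ε₂-differentially private, then the composed mechanism D ↦ (A₁(D), A₂(D, A₁(D))) is (ε₁+ε₂)-differentially private. -/
/-! Conditioning on the first output `o`, the second stage costs a factor `e^ε₂` pointwise in `o`
(applied to the section of `S` at `o`); integrating that bound against `A₁ d` and then trading
`A₁ d` for `e^ε₁ • A₁ d'` costs the factor `e^ε₁`. -/

open MeasureTheory

/-- A measure-valued mechanism satisfies `ε`-differential privacy. -/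
def DP {D Ω : Type*} [MeasurableSpace Ω] (neighbor : D → D → Prop)
    (A : D → Measure Ω) (ε : ℝ) : Prop :=
  ∀ d d', neighbor d d' → ∀ O : Set Ω, MeasurableSet O →
    A d O ≤ ENNReal.ofReal (Real.exp ε) * A d' O

namespace DP

variable {D Ω : Type*} [MeasurableSpace Ω] {neighbor : D → D → Prop} {A : D → Measure Ω} {ε : ℝ}
  {d d' : D}

theorem le_smul (hA : DP neighbor A ε) (hdd' : neighbor d d') :
    A d ≤ ENNReal.ofReal (Real.exp ε) • A d' :=
  Measure.le_iff.2 fun s hs => by simpa using hA d d' hdd' s hs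

theorem lintegral_le (hA : DP neighbor A ε) (hdd' : neighbor d d') (f : Ω → ENNReal) :
    ∫⁻ o, f o ∂A d ≤ ENNReal.ofReal (Real.exp ε) * ∫⁻ o, f o ∂A d' :=
  calc ∫⁻ o, f o ∂A d ≤ ∫⁻ o, f o ∂(ENNReal.ofReal (Real.exp ε) • A d') :=
        lintegral_mono' (hA.le_smul hdd') le_rfl
    _ = ENNReal.ofReal (Real.exp ε) * ∫⁻ o, f o ∂A d' := by
        rw [lintegral_smul_measure, smul_eq_mul]

end DP

theorem DP.lintegral_measure_prodMk_preimage_le {D Ω₁ Ω₂ : Type*} [MeasurableSpace Ω₁]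
    [MeasurableSpace Ω₂] {neighbor : D → D → Prop} {ε : ℝ} {A : D → Ω₁ → Measure Ω₂}
    (hA : ∀ o, DP neighbor (fun d => A d o) ε) {d d' : D} (hdd' : neighbor d d')
    (μ : Measure Ω₁) {S : Set (Ω₁ × Ω₂)} (hS : MeasurableSet S) :
    ∫⁻ o, A d o (Prod.mk o ⁻¹' S) ∂μ
      ≤ ENNReal.ofReal (Real.exp ε) * ∫⁻ o, A d' o (Prod.mk o ⁻¹' S) ∂μ := by
  rw [← lintegral_const_mul' _ _ ENNReal.ofReal_ne_top]
  exact lintegral_mono fun o => hA o d d' hdd' _ (measurable_prodMk_left hS)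

/-- Sequential (adaptive) composition: if `A₁` is `ε₁`-DP and for each output `o` of `A₁`
the mechanism `A₂ · o` is `ε₂`-DP, then the composed mechanism
`D ↦ (A₁(D), A₂(D, A₁(D)))` is `(ε₁ + ε₂)`-DP. -/
theorem sequential_composition {D Ω₁ Ω₂ : Type*}
    [MeasurableSpace Ω₁] [MeasurableSpace Ω₂]
    (neighbor : D → D → Prop) (ε₁ ε₂ : ℝ)
    (A₁ : D → Measure Ω₁) (A₂ : D → Ω₁ → Measure Ω₂)
    (h₁ : DP neighbor A₁ ε₁)
    (h₂ : ∀ o : Ω₁, DP neighbor (fun d => A₂ d o) ε₂) :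
    ∀ d d', neighbor d d' → ∀ S : Set (Ω₁ × Ω₂), MeasurableSet S →
      ∫⁻ o, A₂ d o (Prod.mk o ⁻¹' S) ∂(A₁ d)
        ≤ ENNReal.ofReal (Real.exp (ε₁ + ε₂)) * ∫⁻ o, A₂ d' o (Prod.mk o ⁻¹' S) ∂(A₁ d') := by
  intro d d' hdd' S hS
  calc ∫⁻ o, A₂ d o (Prod.mk o ⁻¹' S) ∂(A₁ d)
      ≤ ENNReal.ofReal (Real.exp ε₂) * ∫⁻ o, A₂ d' o (Prod.mk o ⁻¹' S) ∂(A₁ d) :=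
        DP.lintegral_measure_prodMk_preimage_le h₂ hdd' _ hS
    _ ≤ ENNReal.ofReal (Real.exp ε₂)
          * (ENNReal.ofReal (Real.exp ε₁) * ∫⁻ o, A₂ d' o (Prod.mk o ⁻¹' S) ∂(A₁ d')) := by
        gcongr
        exact h₁.lintegral_le hdd' _
    _ = ENNReal.ofReal (Real.exp (ε₁ + ε₂)) * ∫⁻ o, A₂ d' o (Prod.mk o ⁻¹' S) ∂(A₁ d') := by
        rw [← mul_assoc, ← ENNReal.ofReal_mul (Real.exp_nonneg _), ← Real.exp_add, add_comm]
end

section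
/- If ℓ(·, z) is λ-strongly convex in w and L-Lipschitz in w for each data point z, then the minimizer of the regularized empirical risk on a dataset of size n changes by at most 2L/(λn) in L2 norm when a single data point is replaced. -/
open InnerProductSpace

/-- Quadratic growth at a minimizer of a strongly convex function. -/
lemma strongConvex_growth {E : Type*} [NormedAddCommGroup E] [InnerProductSpace ℝ E]
    {m : ℝ} (hm : 0 ≤ m) {f : E → ℝ} (hf : StrongConvexOn Set.univ m f)
    {x : E} (hx : ∀ w, f x ≤ f w) (y : E) :
    f x + m / 2 * ‖x - y‖ ^ 2 ≤ f y := by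
  set c : ℝ := m / 2 * ‖x - y‖ ^ 2 with hc
  have hc0 : 0 ≤ c := by positivity
  have key : ∀ s : ℝ, 0 < s → s < 1 → s * c ≤ f y - f x := by
    intro s hs0 hs1
    obtain ⟨-, hconv⟩ := hf
    have h := hconv (Set.mem_univ x) (Set.mem_univ y)
      (a := s) (b := 1 - s) hs0.le (by linarith) (by ring)
    have hmin := hx (s • x + (1 - s) • y)
    have h2 : f x ≤ s * f x + (1 - s) * f y - s * (1 - s) * c := by
      simpa [smul_eq_mul, hc] using hmin.trans h
    have h3 : (1 - s) * f x ≤ (1 - s) * f y - s * (1 - s) * c := by linarith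
    have hs1' : (0:ℝ) < 1 - s := by linarith
    nlinarith [mul_le_mul_of_nonneg_left h3 (le_of_lt (inv_pos.mpr hs1')),
      mul_inv_cancel₀ (ne_of_gt hs1')]
  have hd0 : 0 ≤ f y - f x := by linarith [hx y]
  have : c ≤ f y - f x := by
    by_contra hlt
    push_neg at hlt
    have hcpos : 0 < c := lt_of_le_of_lt hd0 hlt
    obtain ⟨s, hs1, hs2⟩ := exists_between ((div_lt_one hcpos).mpr hlt)
    have hs0 : 0 < s := lt_of_le_of_lt (div_nonneg hd0 hc0) hs1
    have hbig : f y - f x < s * c := by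
      calc f y - f x = (f y - f x) / c * c := by field_simp
        _ < s * c := mul_lt_mul_of_pos_right hs1 hcpos
    linarith [key s hs0 hs2]
  linarith

/-- Stability of regularized ERM: if the objectives `F` (for dataset `D`) and `G`
(for a neighboring dataset `D'` differing in one point) are `λ`-strongly convex,
differ only in one `L`-Lipschitz loss term weighted by `1/n`, then their minimizers
are at distance at most `2L/(λ n)`. -/
theorem erm_stability {E : Type*} [NormedAddCommGroup E] [InnerProductSpace ℝ E]
    (n : ℕ) (hn : 0 < n) (L lam : ℝ) (hL : 0 ≤ L) (hlam : 0 < lam)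
    (ℓ ℓ' : E → ℝ)
    (hℓ : LipschitzWith (Real.toNNReal L) ℓ) (hℓ' : LipschitzWith (Real.toNNReal L) ℓ')
    (F G : E → ℝ)
    (hFG : ∀ w, G w = F w + (1 / n) * (ℓ' w - ℓ w))
    (hFconv : StrongConvexOn Set.univ lam F)
    (hGconv : StrongConvexOn Set.univ lam G)
    (wF wG : E)
    (hwF : ∀ w, F wF ≤ F w) (hwG : ∀ w, G wG ≤ G w) :
    ‖wF - wG‖ ≤ 2 * L / (lam * n) := by
  have hnR : (0:ℝ) < n := by exact_mod_cast hn
  set d : ℝ := ‖wF - wG‖ with hd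
  have hd0 : 0 ≤ d := norm_nonneg _
  have h1 : F wF + lam / 2 * d ^ 2 ≤ F wG := strongConvex_growth hlam.le hFconv hwF wG
  have h2 : G wG + lam / 2 * d ^ 2 ≤ G wF := by
    have := strongConvex_growth hlam.le hGconv hwG wF
    rwa [show ‖wG - wF‖ = d by rw [hd, norm_sub_rev]] at this
  have hlip1 : |ℓ wG - ℓ wF| ≤ L * d := by
    have := hℓ.dist_le_mul wG wF
    rwa [Real.coe_toNNReal L hL, Real.dist_eq, dist_eq_norm, norm_sub_rev] at this
  have hlip2 : |ℓ' wF - ℓ' wG| ≤ L * d := by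
    have := hℓ'.dist_le_mul wF wG
    rwa [Real.coe_toNNReal L hL, Real.dist_eq, dist_eq_norm] at this
  have habs1 : ℓ wG - ℓ wF ≤ L * d := le_trans (le_abs_self _) hlip1
  have habs2 : ℓ' wF - ℓ' wG ≤ L * d := le_trans (le_abs_self _) hlip2
  have hsum : lam * d ^ 2 ≤ (1 / n) * (2 * L * d) := by
    have e1 : G wG = F wG + (1 / n) * (ℓ' wG - ℓ wG) := hFG wG
    have e2 : G wF = F wF + (1 / n) * (ℓ' wF - ℓ wF) := hFG wF
    have hn1 : (0:ℝ) ≤ 1 / n := by positivity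
    nlinarith [mul_le_mul_of_nonneg_left habs1 hn1, mul_le_mul_of_nonneg_left habs2 hn1]
  rcases eq_or_lt_of_le hd0 with h | h
  · rw [← h]; positivity
  · rw [le_div_iff₀ (by positivity : (0:ℝ) < lam * n)]
    have h' : lam * n * d ^ 2 ≤ 2 * L * d := by
      have h2 := mul_le_mul_of_nonneg_left hsum hnR.le
      have hne : (n:ℝ) ≠ 0 := ne_of_gt hnR
      calc lam * n * d ^ 2 = n * (lam * d ^ 2) := by ring
        _ ≤ n * (1 / n * (2 * L * d)) := h2
        _ = 2 * L * d := by field_simp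
    nlinarith [h', h]
end
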